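/- Let A be a complex symmetric N×N matrix with operator norm κ < 1, and w ∈ ℂ^N with |w| = 1. Define the phase φ(z,t) = e^{it} z w̄ᵀ + (1/2)(e^{it}z − w)A(e^{it}z − w)ᵀ − it − (|z|² + |w|²)/2 for z on the unit sphere and t ∈ ℝ. Then Re(φ(z,t)) ≤ 0, with equality if and only if e^{it}z = w. -/

import Mathlib

open scoped BigOperators Real
open Matrix
open scoped ComplexOrder

/-- `Q_A(z) = z A zᵀ`. -/
noncomputable def quadForm {N : ℕ} (A : Matrix (Fin N) (Fin N) ℂ) (z : Fin N → ℂ) : ℂ :=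
  ∑ i, ∑ j, z i * A i j * z j

/-- Hermitian pairing `z w̄ᵀ`. -/
noncomputable def dotc {N : ℕ} (z w : Fin N → ℂ) : ℂ :=
  ∑ j, z j * (starRingEnd ℂ) (w j)

/-- `|z|²`. -/
noncomputable def nsq {N : ℕ} (z : Fin N → ℂ) : ℝ :=
  ∑ j, Complex.normSq (z j)

/-- The phase
`φ(z,t) = e^{it} z w̄ᵀ + ½ Q_A(e^{it}z − w) − it − (|z|² + |w|²)/2`. -/
noncomputable def phase {N : ℕ} (A : Matrix (Fin N) (Fin N) ℂ) (w z : Fin N → ℂ)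
    (t : ℝ) : ℂ :=
  Complex.exp (Complex.I * t) * dotc z w +
    quadForm A (fun j => Complex.exp (Complex.I * t) * z j - w j) / 2 -
    Complex.I * t - ((nsq z + nsq w : ℝ) : ℂ) / 2

/-! Put `v = e^{it} z - w`. Because `|e^{it}| = 1`, expanding `|v|²` shows
`Re φ(z,t) = (Re Q_A(v) - |v|²) / 2` for all `z`, `w`. Positive definiteness of `1 - A^* A` gives
`|Av| < |v|` for `v ≠ 0`, so by Cauchy–Schwarz `Re Q_A(v) ≤ |v ⬝ᵥ Av| ≤ |v| |Av| < |v|²`.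
Hence `Re φ ≤ 0`, with equality exactly when `v = 0`. -/

lemma nsq_nonneg {N : ℕ} (v : Fin N → ℂ) : 0 ≤ nsq v :=
  Finset.sum_nonneg fun _ _ => Complex.normSq_nonneg _

lemma ofReal_nsq {N : ℕ} (v : Fin N → ℂ) : (nsq v : ℂ) = star v ⬝ᵥ v := by
  simp [nsq, dotProduct, Complex.normSq_eq_conj_mul_self]

lemma nsq_pos {N : ℕ} {v : Fin N → ℂ} (hv : v ≠ 0) : 0 < nsq v := by
  rw [← Complex.zero_lt_real, ofReal_nsq]
  exact dotProduct_star_self_pos_iff.2 hv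

lemma quadForm_eq_dotProduct_mulVec {N : ℕ} (A : Matrix (Fin N) (Fin N) ℂ) (v : Fin N → ℂ) :
    quadForm A v = v ⬝ᵥ A *ᵥ v := by
  simp [quadForm, mulVec, dotProduct, Finset.mul_sum, mul_assoc]

lemma norm_dotProduct_sq_le {N : ℕ} (v u : Fin N → ℂ) : ‖v ⬝ᵥ u‖ ^ 2 ≤ nsq v * nsq u := by
  have hsum : ‖v ⬝ᵥ u‖ ≤ ∑ i, ‖v i‖ * ‖u i‖ := by
    simpa [dotProduct] using norm_sum_le Finset.univ fun i => v i * u i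
  calc ‖v ⬝ᵥ u‖ ^ 2 ≤ (∑ i, ‖v i‖ * ‖u i‖) ^ 2 := by gcongr
    _ ≤ nsq v * nsq u := by
      simpa [nsq, Complex.sq_norm] using
        Finset.sum_mul_sq_le_sq_mul_sq Finset.univ (fun i => ‖v i‖) fun i => ‖u i‖

lemma nsq_mulVec_lt_of_posDef {N : ℕ} {A : Matrix (Fin N) (Fin N) ℂ} (hA : (1 - Aᴴ * A).PosDef)
    {v : Fin N → ℂ} (hv : v ≠ 0) : nsq (A *ᵥ v) < nsq v := by
  have h := hA.dotProduct_mulVec_pos hv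
  rw [sub_mulVec, dotProduct_sub, one_mulVec, ← mulVec_mulVec, dotProduct_mulVec,
    ← star_mulVec, ← ofReal_nsq, ← ofReal_nsq, sub_pos, Complex.real_lt_real] at h
  exact h

lemma re_quadForm_lt_nsq {N : ℕ} {A : Matrix (Fin N) (Fin N) ℂ} (hA : (1 - Aᴴ * A).PosDef)
    {v : Fin N → ℂ} (hv : v ≠ 0) : (quadForm A v).re < nsq v := by
  have hsq : ‖quadForm A v‖ ^ 2 < nsq v ^ 2 := by
    rw [quadForm_eq_dotProduct_mulVec, sq (nsq v)]
    exact (norm_dotProduct_sq_le v _).trans_lt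
      (mul_lt_mul_of_pos_left (nsq_mulVec_lt_of_posDef hA hv) (nsq_pos hv))
  exact (Complex.re_le_norm _).trans_lt (pow_lt_pow_iff_left₀ (norm_nonneg _) (nsq_nonneg v)
    two_ne_zero |>.1 hsq)

lemma nsq_mul_sub_of_norm_eq_one {N : ℕ} {e : ℂ} (he : ‖e‖ = 1) (z w : Fin N → ℂ) :
    nsq (fun j => e * z j - w j) = nsq z + nsq w - 2 * (e * dotc z w).re := by
  have hterm (j : Fin N) : Complex.normSq (e * z j - w j) = Complex.normSq (z j) +
      Complex.normSq (w j) - 2 * (e * (z j * (starRingEnd ℂ) (w j))).re := by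
    rw [Complex.normSq_sub, Complex.normSq_mul, Complex.normSq_eq_norm_sq e, he, one_pow, one_mul,
      mul_assoc]
  simp only [nsq, hterm, Finset.sum_sub_distrib, Finset.sum_add_distrib, dotc, Finset.mul_sum,
    Complex.re_sum]

lemma re_phase_eq {N : ℕ} (A : Matrix (Fin N) (Fin N) ℂ) (w z : Fin N → ℂ) (t : ℝ) :
    (phase A w z t).re = ((quadForm A (fun j => Complex.exp (Complex.I * t) * z j - w j)).re -
      nsq (fun j => Complex.exp (Complex.I * t) * z j - w j)) / 2 := by
  rw [nsq_mul_sub_of_norm_eq_one (by simp)]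
  simp only [phase, Complex.ofReal_add, Complex.sub_re, Complex.add_re, Complex.mul_re,
    Complex.div_ofNat_re, Complex.I_re, Complex.ofReal_re, zero_mul, Complex.I_im,
    Complex.ofReal_im, mul_zero, sub_self, sub_zero]
  ring

theorem stmt8_general {N : ℕ} (A : Matrix (Fin N) (Fin N) ℂ)
    (hA : (1 - Aᴴ * A).PosDef) (w z : Fin N → ℂ) (t : ℝ) :
    (phase A w z t).re ≤ 0 ∧
      ((phase A w z t).re = 0 ↔ (fun j => Complex.exp (Complex.I * t) * z j) = w) := by
  rw [re_phase_eq]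
  set v : Fin N → ℂ := fun j => Complex.exp (Complex.I * t) * z j - w j with hv
  have hdiff : (fun j => Complex.exp (Complex.I * t) * z j) = w ↔ v = 0 := by
    simp only [hv, funext_iff, Pi.zero_apply, sub_eq_zero]
  rw [hdiff]
  rcases eq_or_ne v 0 with h0 | h0
  · simp [h0, quadForm, nsq]
  · have := re_quadForm_lt_nsq hA h0
    exact ⟨by linarith, iff_of_false (by linarith) h0⟩

/-- `Re(φ(z,t)) ≤ 0`, with equality iff `e^{it}z = w`. -/
theorem stmt8 {N : ℕ} (A : Matrix (Fin N) (Fin N) ℂ) (hsym : A.IsSymm)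
    (hA : (1 - Aᴴ * A).PosDef) (w z : Fin N → ℂ) (hw : nsq w = 1)
    (hz : nsq z = 1) (t : ℝ) :
    (phase A w z t).re ≤ 0 ∧
      ((phase A w z t).re = 0 ↔ (fun j => Complex.exp (Complex.I * t) * z j) = w) :=
  stmt8_general A hA w z t
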